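/- Let X be a compact ultrametrizable space and S a range set with countable coinitiality. Then for every d ∈ Ult(X,S) and every ε > 0 in S, there exists a doubling D ∈ Ult(X,S) with 𝒰𝒟_X^S(D,d) ≤ ε. Hence the set of doubling S-valued ultrametrics is dense in (Ult(X,S), 𝒰𝒟_X^S). -/

import Mathlib

open Set Topology Filter ENNReal

/-- The metric topology of `d` coincides with the given topology on `X`. -/
def GeneratesTopology {X : Type*} [TopologicalSpace X] (d : X → X → ℝ) : Prop :=
  ∀ s : Set X, IsOpen s ↔ ∀ x ∈ s, ∃ ε > 0, ∀ y, d x y < ε → y ∈ s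

/-- `d` is an ultrametric on the whole type `X`. -/
def IsUltrametricOn {X : Type*} (d : X → X → ℝ) : Prop :=
  (∀ x y, d x y = 0 ↔ x = y) ∧ (∀ x y, d x y = d y x) ∧
    ∀ x y z, d x y ≤ max (d x z) (d z y)

/-- Membership in `Ult(X,S)`: `d` is an `S`-valued ultrametric generating the
topology of `X`. -/
def MemUlt {X : Type*} [TopologicalSpace X] (S : Set ℝ) (d : X → X → ℝ) : Prop :=
  IsUltrametricOn d ∧ (∀ x y, d x y ∈ S) ∧ GeneratesTopology d

/-- The ultrametric `𝒰𝒟_X^S(d,e)`: the infimum of `ε ∈ S ∪ {∞}` such that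
`d ≤ max (e, ε)` and `e ≤ max (d, ε)` pointwise. -/
noncomputable def UDdist {X : Type*} (S : Set ℝ) (d e : X → X → ℝ) : ℝ≥0∞ :=
  sInf ({⊤} ∪ ENNReal.ofReal '' {ε : ℝ | ε ∈ S ∧
    ∀ x y, d x y ≤ max (e x y) ε ∧ e x y ≤ max (d x y) ε})

/-- Diameter of a finite set with respect to the distance function `d`. -/
noncomputable def finsetDiam {X : Type*} (d : X → X → ℝ) (A : Finset X) : ℝ :=
  sSup {r : ℝ | ∃ x ∈ A, ∃ y ∈ A, d x y = r}

/-- Minimal positive distance `α_d(A)` of a finite set `A`. -/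
noncomputable def finsetAlpha {X : Type*} (d : X → X → ℝ) (A : Finset X) : ℝ :=
  sInf {r : ℝ | ∃ x ∈ A, ∃ y ∈ A, x ≠ y ∧ d x y = r}

/-- `d` is doubling. -/
def Doubling {X : Type*} (d : X → X → ℝ) : Prop :=
  ∃ C : ℝ, 1 ≤ C ∧ ∃ β : ℝ, 0 < β ∧ ∀ F : Finset X, 2 ≤ F.card →
    (F.card : ℝ) ≤ C * (finsetDiam d F / finsetAlpha d F) ^ β


/-!
Choose `t n ∈ S` with `2 * t (n + 1) ≤ t n` and `2 * t 0 ≤ ε`, and list the closed `t k`-balls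
about the points of finite `t k`-nets as one sequence `U 0, U 1, …`, indexed so that `U n` has
radius at least `t n`. Below scale `ε` replace `d x y` by `t n`, where `n` is the first index at
which `U n` separates `x` and `y`. This keeps an `S`-valued ultrametric with the same topology,
within `ε` of `d`. It is doubling: points of a finite set whose pairs are all separated first
at indices in `[j, k)` are determined by their membership in `U j, …, U (k - 1)`, so there are at
most `2 ^ (k - j)` of them, while the halving gives `t j / t (k - 1) ≥ 2 ^ (k - 1 - j)`; pairs at
distance more than `ε` only contribute the finitely many `ε`-classes.
-/

section

variable {X : Type*}

lemma IsUltrametricOn.self_eq_zero {d : X → X → ℝ} (hd : IsUltrametricOn d) (x : X) :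
    d x x = 0 :=
  (hd.1 x x).2 rfl

lemma IsUltrametricOn.nonneg {d : X → X → ℝ} (hd : IsUltrametricOn d) (x y : X) :
    0 ≤ d x y := by
  have h := hd.2.2 x x y
  rw [hd.self_eq_zero, hd.2.1 y x, max_self] at h
  exact h

lemma IsUltrametricOn.pos_of_ne {d : X → X → ℝ} (hd : IsUltrametricOn d) {x y : X}
    (hxy : x ≠ y) : 0 < d x y :=
  (hd.nonneg x y).lt_of_ne fun h => hxy ((hd.1 x y).1 h.symm)

lemma IsUltrametricOn.le_of_le_of_le {d : X → X → ℝ} (hd : IsUltrametricOn d) {x y z : X}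
    {r : ℝ} (hxz : d x z ≤ r) (hzy : d z y ≤ r) : d x y ≤ r :=
  (hd.2.2 x y z).trans (max_le hxz hzy)

def BallRefines (d e : X → X → ℝ) : Prop :=
  ∀ x, ∀ γ > 0, ∃ δ > 0, ∀ y, d x y < δ → e x y < γ

lemma GeneratesTopology.of_ballRefines [TopologicalSpace X] {d e : X → X → ℝ}
    (hd : GeneratesTopology d) (hde : BallRefines d e) (hed : BallRefines e d) :
    GeneratesTopology e := by
  intro s
  rw [hd s]
  constructor
  · intro h x hx
    obtain ⟨δ, hδ, hball⟩ := h x hx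
    obtain ⟨γ, hγ, himp⟩ := hed x δ hδ
    exact ⟨γ, hγ, fun y hy => hball y (himp y hy)⟩
  · intro h x hx
    obtain ⟨γ, hγ, hball⟩ := h x hx
    obtain ⟨δ, hδ, himp⟩ := hde x γ hγ
    exact ⟨δ, hδ, fun y hy => hball y (himp y hy)⟩

lemma exists_finset_forall_le [TopologicalSpace X] [CompactSpace X] {d : X → X → ℝ}
    (hd : IsUltrametricOn d) (hgen : GeneratesTopology d) {r : ℝ} (hr : 0 < r) :
    ∃ N : Finset X, ∀ x, ∃ c ∈ N, d c x ≤ r := by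
  have hopen : ∀ c : X, IsOpen {y | d c y < r} := fun c =>
    (hgen _).2 fun x hx => ⟨r, hr, fun y hy => (hd.2.2 c y x).trans_lt (max_lt hx hy)⟩
  have hcover : univ ⊆ ⋃ c, {y | d c y < r} := fun x _ =>
    mem_iUnion.2 ⟨x, by simpa [hd.self_eq_zero] using hr⟩
  obtain ⟨N, hN⟩ := isCompact_univ.elim_finite_subcover _ hopen hcover
  refine ⟨N, fun x => ?_⟩
  obtain ⟨c, hc, hcx⟩ := mem_iUnion₂.1 (hN (mem_univ x))
  exact ⟨c, hc, (le_of_lt hcx)⟩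

section Halving

variable {t : ℕ → ℝ} (hhalf : ∀ n, 2 * t (n + 1) ≤ t n)
include hhalf

lemma strictAnti_of_halving (ht : ∀ n, 0 < t n) : StrictAnti t :=
  strictAnti_nat_of_succ_lt fun n => by linarith [ht (n + 1), hhalf n]

lemma two_pow_mul_le_of_halving (a b : ℕ) : 2 ^ b * t (a + b) ≤ t a := by
  induction b with
  | zero => simp
  | succ b ih =>
    calc 2 ^ (b + 1) * t (a + (b + 1)) = 2 ^ b * (2 * t (a + b + 1)) := by ring_nf
      _ ≤ 2 ^ b * t (a + b) := by gcongr; exact hhalf _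
      _ ≤ t a := ih

lemma exists_lt_of_halving {c : ℝ} (hc : 0 < c) : ∃ n, t n < c := by
  obtain ⟨n, hn⟩ := pow_unbounded_of_one_lt (t 0 / c) one_lt_two
  refine ⟨n, lt_of_mul_lt_mul_left ?_ (pow_nonneg zero_le_two n)⟩
  calc 2 ^ n * t n = 2 ^ n * t (0 + n) := by rw [zero_add]
    _ ≤ t 0 := two_pow_mul_le_of_halving hhalf 0 n
    _ < 2 ^ n * c := by rw [div_lt_iff₀ hc] at hn; linarith

end Halving

lemma exists_pos_mem_le_of_strictAnti {S : Set ℝ} (hS : S ⊆ Ici 0) {s : ℕ → ℝ}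
    (hs_anti : StrictAnti s) (hsS : ∀ n, s n ∈ S) (hs_lim : Tendsto s atTop (𝓝 0)) :
    ∀ c > 0, ∃ x ∈ S, 0 < x ∧ x ≤ c := by
  intro c hc
  obtain ⟨n, hn⟩ := (hs_lim.eventually (ge_mem_nhds hc)).exists
  exact ⟨s (n + 1), hsS _, (hS (hsS (n + 2))).trans_lt (hs_anti (n + 1).lt_succ_self),
    (hs_anti n.lt_succ_self).le.trans hn⟩

lemma exists_halving_seq {S : Set ℝ} (hS : ∀ c > 0, ∃ x ∈ S, 0 < x ∧ x ≤ c) {ε : ℝ}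
    (hε : 0 < ε) :
    ∃ t : ℕ → ℝ, (∀ n, t n ∈ S) ∧ (∀ n, 0 < t n) ∧ 2 * t 0 ≤ ε ∧
      ∀ n, 2 * t (n + 1) ≤ t n := by
  choose! f hfS hfpos hfle using hS
  let t : ℕ → ℝ := fun n => Nat.rec (f (ε / 2)) (fun _ x => f (x / 2)) n
  have ht : ∀ n, 0 < t n := by
    intro n
    induction n with
    | zero => exact hfpos _ (half_pos hε)
    | succ n ih => exact hfpos _ (half_pos ih)
  refine ⟨t, fun n => ?_, ht, ?_, fun n => ?_⟩
  · cases n with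
    | zero => exact hfS _ (half_pos hε)
    | succ n => exact hfS _ (half_pos (ht n))
  · linarith [show t 0 ≤ ε / 2 from hfle _ (half_pos hε)]
  · linarith [show t (n + 1) ≤ t n / 2 from hfle _ (half_pos (ht n))]

section SepIndex

variable (U : ℕ → Set X)

/-- Junk value `0` when no `U n` separates `x` from `y`. -/
noncomputable def sepIndex (x y : X) : ℕ :=
  sInf {n | ¬(x ∈ U n ↔ y ∈ U n)}

noncomputable def sepDist (t : ℕ → ℝ) (x y : X) : ℝ :=
  open Classical in if x = y then 0 else t (sepIndex U x y)

def IsSeparating : Prop :=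
  ∀ x y, x ≠ y → ∃ n, ¬(x ∈ U n ↔ y ∈ U n)

variable {U} {x y : X}

lemma sepIndex_comm (x y : X) : sepIndex U x y = sepIndex U y x := by
  simp only [sepIndex, iff_comm]

lemma sepIndex_le {n : ℕ} (h : ¬(x ∈ U n ↔ y ∈ U n)) : sepIndex U x y ≤ n :=
  Nat.sInf_le h

lemma mem_iff_of_lt_sepIndex {n : ℕ} (h : n < sepIndex U x y) : x ∈ U n ↔ y ∈ U n :=
  not_not.1 fun h' => (sepIndex_le h').not_gt h

lemma sepIndex_separates (h : ∃ n, ¬(x ∈ U n ↔ y ∈ U n)) :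
    ¬(x ∈ U (sepIndex U x y) ↔ y ∈ U (sepIndex U x y)) :=
  Nat.sInf_mem h

lemma min_sepIndex_le (z : X) (h : ∃ n, ¬(x ∈ U n ↔ y ∈ U n)) :
    min (sepIndex U x z) (sepIndex U z y) ≤ sepIndex U x y := by
  by_contra! hlt
  exact sepIndex_separates h <|
    (mem_iff_of_lt_sepIndex (hlt.trans_le (min_le_left _ _))).trans
      (mem_iff_of_lt_sepIndex (hlt.trans_le (min_le_right _ _)))

variable {t : ℕ → ℝ}

lemma sepDist_self (x : X) : sepDist U t x x = 0 := if_pos rfl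

lemma sepDist_of_ne (h : x ≠ y) : sepDist U t x y = t (sepIndex U x y) := if_neg h

lemma sepDist_nonneg (ht : ∀ n, 0 ≤ t n) (x y : X) : 0 ≤ sepDist U t x y := by
  unfold sepDist; split_ifs <;> simp [ht]

lemma sepDist_le {ε : ℝ} (ht : ∀ n, 0 ≤ t n) (hanti : Antitone t) (htε : t 0 ≤ ε) (x y : X) :
    sepDist U t x y ≤ ε := by
  unfold sepDist; split_ifs
  exacts [(ht 0).trans htε, (hanti (Nat.zero_le _)).trans htε]

lemma sepDist_mem {S : Set ℝ} (hS0 : 0 ∈ S) (htS : ∀ n, t n ∈ S) (x y : X) :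
    sepDist U t x y ∈ S := by
  unfold sepDist; split_ifs
  exacts [hS0, htS _]

lemma isUltrametricOn_sepDist (hU : IsSeparating U)
    (ht : ∀ n, 0 < t n) (hanti : Antitone t) : IsUltrametricOn (sepDist U t) := by
  refine ⟨fun x y => ⟨fun h => ?_, fun h => h ▸ sepDist_self x⟩, fun x y => ?_, fun x y z => ?_⟩
  · by_contra hxy
    exact (ht _).ne' ((sepDist_of_ne hxy).symm.trans h)
  · rcases eq_or_ne x y with rfl | hxy
    · rfl
    · rw [sepDist_of_ne hxy, sepDist_of_ne hxy.symm, sepIndex_comm]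
  · have hnonneg := sepDist_nonneg (U := U) fun n => (ht n).le
    rcases eq_or_ne x y with rfl | hxy
    · rw [sepDist_self]; exact le_max_of_le_left (hnonneg _ _)
    rcases eq_or_ne x z with rfl | hxz
    · rw [sepDist_self]; exact le_max_right _ _
    rcases eq_or_ne z y with rfl | hzy
    · rw [sepDist_self]; exact le_max_left _ _
    rw [sepDist_of_ne hxy, sepDist_of_ne hxz, sepDist_of_ne hzy, ← hanti.map_min]
    exact hanti (min_sepIndex_le z (hU x y hxy))

end SepIndex

section SepDistTopology

variable {d : X → X → ℝ} {U : ℕ → Set X} {t : ℕ → ℝ}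

lemma ballRefines_dist_sepDist (hU : IsSeparating U)
    (hUball : ∀ n x y, d x y ≤ t n → (x ∈ U n ↔ y ∈ U n)) (ht : ∀ n, 0 < t n)
    (hanti : Antitone t) (hsmall : ∀ c > 0, ∃ n, t n < c) : BallRefines d (sepDist U t) := by
  intro x γ hγ
  obtain ⟨m, hm⟩ := hsmall γ hγ
  refine ⟨t m, ht m, fun y hy => ?_⟩
  rcases eq_or_ne x y with rfl | hxy
  · rwa [sepDist_self]
  have hm_le : m ≤ sepIndex U x y := by
    by_contra! hlt
    exact sepIndex_separates (hU x y hxy) (hUball _ x y (hy.le.trans (hanti hlt.le)))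
  rw [sepDist_of_ne hxy]
  exact (hanti hm_le).trans_lt hm

lemma ballRefines_sepDist_dist (hd : IsUltrametricOn d)
    (hUnhds : ∀ x, ∀ r > 0, ∃ n, x ∈ U n ∧ ∀ y ∈ U n, d x y < r) (ht : ∀ n, 0 < t n)
    (hanti : Antitone t) : BallRefines (sepDist U t) d := by
  intro x δ hδ
  obtain ⟨n, hxn, hn⟩ := hUnhds x δ hδ
  refine ⟨t n, ht n, fun y hy => ?_⟩
  rcases eq_or_ne x y with rfl | hxy
  · rwa [hd.self_eq_zero]
  rw [sepDist_of_ne hxy] at hy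
  have hlt : n < sepIndex U x y := by
    by_contra! hle
    exact (hanti hle).not_gt hy
  exact hn y ((mem_iff_of_lt_sepIndex hlt).1 hxn)

lemma separating_of_nhds (hd : IsUltrametricOn d)
    (hUnhds : ∀ x, ∀ r > 0, ∃ n, x ∈ U n ∧ ∀ y ∈ U n, d x y < r) :
    IsSeparating U := by
  intro x y hxy
  obtain ⟨n, hxn, hn⟩ := hUnhds x (d x y) (hd.pos_of_ne hxy)
  exact ⟨n, fun h => (hn y (h.1 hxn)).false⟩

end SepDistTopology

lemma exists_seq_sets_of_compact [TopologicalSpace X] [CompactSpace X] {d : X → X → ℝ}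
    (hd : IsUltrametricOn d) (hgen : GeneratesTopology d) {t : ℕ → ℝ} (ht : ∀ n, 0 < t n)
    (hanti : Antitone t) (hsmall : ∀ c > 0, ∃ n, t n < c) :
    ∃ U : ℕ → Set X, (∀ n x y, d x y ≤ t n → (x ∈ U n ↔ y ∈ U n)) ∧
      ∀ x, ∀ r > 0, ∃ n, x ∈ U n ∧ ∀ y ∈ U n, d x y < r := by
  choose L hL using fun k => exists_finset_forall_le hd hgen (ht k)
  -- `U (Nat.pair k i)` is the closed `t k`-ball about the `i`-th point of the `t k`-net `L k`
  let U : ℕ → Set X := fun n =>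
    {y | ∃ c ∈ (L n.unpair.1).toList[n.unpair.2]?, d c y ≤ t n.unpair.1}
  have hball : ∀ n x y, d x y ≤ t n.unpair.1 → x ∈ U n → y ∈ U n := by
    rintro n x y hxy ⟨c, hc, hcx⟩
    exact ⟨c, hc, hd.le_of_le_of_le hcx hxy⟩
  refine ⟨U, fun n x y hxy => ?_, fun x r hr => ?_⟩
  · have hxy' : d x y ≤ t n.unpair.1 := hxy.trans (hanti (Nat.unpair_left_le n))
    exact ⟨hball n x y hxy', hball n y x (hd.2.1 y x ▸ hxy')⟩
  · obtain ⟨k, hk⟩ := hsmall r hr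
    obtain ⟨c, hcL, hcx⟩ := hL k x
    obtain ⟨i, hi⟩ := List.mem_iff_getElem?.1 (Finset.mem_toList.2 hcL)
    refine ⟨Nat.pair k i, ⟨c, by simpa using hi, by simpa using hcx⟩, ?_⟩
    rintro y ⟨c', hc', hc'y⟩
    simp only [Nat.unpair_pair, hi, Option.mem_def, Option.some.injEq] at hc' hc'y
    subst hc'
    exact (hd.le_of_le_of_le (hd.2.1 x c ▸ hcx) hc'y).trans_lt hk

noncomputable def patchBelow (d ρ : X → X → ℝ) (ε : ℝ) (x y : X) : ℝ :=
  if d x y ≤ ε then ρ x y else d x y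

section PatchBelow

variable {d ρ : X → X → ℝ} {ε : ℝ} {x y : X}

lemma patchBelow_of_le (h : d x y ≤ ε) : patchBelow d ρ ε x y = ρ x y := if_pos h

lemma patchBelow_of_lt (h : ε < d x y) : patchBelow d ρ ε x y = d x y := if_neg h.not_ge

lemma patchBelow_mem {S : Set ℝ} (hd : ∀ x y, d x y ∈ S) (hρ : ∀ x y, ρ x y ∈ S) :
    patchBelow d ρ ε x y ∈ S := by
  unfold patchBelow; split_ifs
  exacts [hρ x y, hd x y]

lemma le_max_patchBelow : d x y ≤ max (patchBelow d ρ ε x y) ε := by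
  rcases le_or_gt (d x y) ε with h | h
  · exact le_max_of_le_right h
  · rw [patchBelow_of_lt h]; exact le_max_left _ _

lemma patchBelow_le_max (hρε : ∀ x y, ρ x y ≤ ε) : patchBelow d ρ ε x y ≤ max (d x y) ε := by
  rcases le_or_gt (d x y) ε with h | h
  · rw [patchBelow_of_le h]; exact le_max_of_le_right (hρε x y)
  · rw [patchBelow_of_lt h]; exact le_max_left _ _

lemma isUltrametricOn_patchBelow (hd : IsUltrametricOn d) (hρ : IsUltrametricOn ρ)
    (hρε : ∀ x y, ρ x y ≤ ε) : IsUltrametricOn (patchBelow d ρ ε) := by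
  refine ⟨fun x y => ?_, fun x y => ?_, fun x y z => ?_⟩
  · unfold patchBelow; split_ifs
    exacts [hρ.1 x y, hd.1 x y]
  · simp only [patchBelow, hd.2.1 x y, hρ.2.1 x y]
  · rcases le_or_gt (d x y) ε with hxy | hxy
    · rw [patchBelow_of_le hxy]
      rcases le_or_gt (d x z) ε with hxz | hxz
      · rcases le_or_gt (d z y) ε with hzy | hzy
        · rw [patchBelow_of_le hxz, patchBelow_of_le hzy]; exact hρ.2.2 x y z
        · rw [patchBelow_of_lt hzy]; exact le_max_of_le_right ((hρε x y).trans hzy.le)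
      · rw [patchBelow_of_lt hxz]; exact le_max_of_le_left ((hρε x y).trans hxz.le)
    · rw [patchBelow_of_lt hxy]
      have h := (hd.2.2 x y z).trans
        (max_le_max (le_max_patchBelow (ρ := ρ) (ε := ε)) (le_max_patchBelow (ρ := ρ) (ε := ε)))
      rw [max_max_max_comm, max_self] at h
      exact (le_max_iff.1 h).resolve_right hxy.not_ge

lemma ballRefines_dist_patchBelow (hε : 0 < ε) (h : BallRefines d ρ) :
    BallRefines d (patchBelow d ρ ε) := by
  intro x γ hγ
  obtain ⟨δ, hδ, hρ⟩ := h x γ hγ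
  refine ⟨min δ ε, lt_min hδ hε, fun y hy => ?_⟩
  rw [patchBelow_of_le (hy.trans_le (min_le_right _ _)).le]
  exact hρ y (hy.trans_le (min_le_left _ _))

lemma ballRefines_patchBelow_dist (hε : 0 < ε) (h : BallRefines ρ d) :
    BallRefines (patchBelow d ρ ε) d := by
  intro x δ hδ
  obtain ⟨γ, hγ, hρ⟩ := h x δ hδ
  refine ⟨min γ ε, lt_min hγ hε, fun y hy => ?_⟩
  rcases le_or_gt (d x y) ε with hxy | hxy
  · rw [patchBelow_of_le hxy] at hy
    exact hρ y (hy.trans_le (min_le_left _ _))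
  · rw [patchBelow_of_lt hxy] at hy
    exact absurd (hy.trans_le (min_le_right _ _)) hxy.not_gt

end PatchBelow

lemma UDdist_le_ofReal {S : Set ℝ} {d e : X → X → ℝ} {ε : ℝ} (hεS : ε ∈ S)
    (h : ∀ x y, d x y ≤ max (e x y) ε ∧ e x y ≤ max (d x y) ε) :
    UDdist S d e ≤ ENNReal.ofReal ε :=
  sInf_le (mem_union_right _ ⟨ε, ⟨hεS, h⟩, rfl⟩)

section FinsetDiam

variable (d : X → X → ℝ) {A : Finset X} {x y : X}

lemma le_finsetDiam (hx : x ∈ A) (hy : y ∈ A) : d x y ≤ finsetDiam d A :=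
  le_csSup (A.finite_toSet.image2 d A.finite_toSet).bddAbove ⟨x, hx, y, hy, rfl⟩

lemma exists_eq_finsetDiam (hA : A.Nonempty) : ∃ x ∈ A, ∃ y ∈ A, d x y = finsetDiam d A := by
  obtain ⟨x, hx⟩ := hA
  exact Set.Nonempty.csSup_mem (s := {r | ∃ x ∈ A, ∃ y ∈ A, d x y = r})
    ⟨d x x, x, hx, x, hx, rfl⟩ (A.finite_toSet.image2 d A.finite_toSet)

lemma finite_dist_ne (A : Finset X) : {r : ℝ | ∃ x ∈ A, ∃ y ∈ A, x ≠ y ∧ d x y = r}.Finite :=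
  (A.finite_toSet.image2 d A.finite_toSet).subset fun _ ⟨x, hx, y, hy, _, h⟩ => ⟨x, hx, y, hy, h⟩

lemma finsetAlpha_le (hx : x ∈ A) (hy : y ∈ A) (hxy : x ≠ y) : finsetAlpha d A ≤ d x y :=
  csInf_le (finite_dist_ne d A).bddBelow ⟨x, hx, y, hy, hxy, rfl⟩

lemma exists_eq_finsetAlpha (hA : 1 < A.card) :
    ∃ x ∈ A, ∃ y ∈ A, x ≠ y ∧ d x y = finsetAlpha d A := by
  obtain ⟨x, hx, y, hy, hxy⟩ := Finset.one_lt_card.1 hA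
  exact Set.Nonempty.csInf_mem (s := {r | ∃ x ∈ A, ∃ y ∈ A, x ≠ y ∧ d x y = r})
    ⟨d x y, x, hx, y, hy, hxy, rfl⟩ (finite_dist_ne d A)

lemma finsetAlpha_le_finsetDiam (hA : 1 < A.card) : finsetAlpha d A ≤ finsetDiam d A := by
  obtain ⟨x, hx, y, hy, hxy, h⟩ := exists_eq_finsetAlpha d hA
  exact h ▸ le_finsetDiam d hx hy

lemma finsetAlpha_pos (hd : IsUltrametricOn d) (hA : 1 < A.card) : 0 < finsetAlpha d A := by
  obtain ⟨x, hx, y, hy, hxy, h⟩ := exists_eq_finsetAlpha d hA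
  exact h ▸ hd.pos_of_ne hxy

end FinsetDiam

lemma card_le_card_image_mul_two_pow {ι : Type*} [DecidableEq ι] (U : ℕ → Set X)
    (F : Finset X) (g : X → ι) (j k : ℕ)
    (h : ∀ x ∈ F, ∀ y ∈ F, x ≠ y → g x = g y → ∃ n, j ≤ n ∧ n < k ∧ ¬(x ∈ U n ↔ y ∈ U n)) :
    F.card ≤ (F.image g).card * 2 ^ (k - j) := by
  classical
  let code : X → ι × (Fin (k - j) → Bool) := fun x => (g x, fun i => decide (x ∈ U (j + i)))
  have hinj : Set.InjOn code F := by
    intro x hx y hy hxy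
    by_contra hne
    obtain ⟨n, hjn, hnk, hsep⟩ := h x hx y hy hne (congrArg Prod.fst hxy)
    have := congrFun (congrArg Prod.snd hxy) ⟨n - j, by omega⟩
    simp only [code, Nat.add_sub_cancel' hjn, decide_eq_decide] at this
    exact hsep this
  calc F.card ≤ (F.image g ×ˢ (Finset.univ : Finset (Fin (k - j) → Bool))).card :=
        Finset.card_le_card_of_injOn code
          (fun x hx => Finset.mem_product.2 ⟨Finset.mem_image_of_mem g hx, Finset.mem_univ _⟩) hinj
    _ = (F.image g).card * 2 ^ (k - j) := by simp

section Doubling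

variable {d : X → X → ℝ} {U : ℕ → Set X} {t : ℕ → ℝ} {ε : ℝ}
  (hd : IsUltrametricOn d) (hU : IsSeparating U)
  (ht : ∀ n, 0 < t n) (hhalf : ∀ n, 2 * t (n + 1) ≤ t n) (htε : 2 * t 0 ≤ ε)
include hd hU ht hhalf htε

lemma isUltrametricOn_patchBelow_sepDist : IsUltrametricOn (patchBelow d (sepDist U t) ε) :=
  have hanti := (strictAnti_of_halving hhalf ht).antitone
  isUltrametricOn_patchBelow hd (isUltrametricOn_sepDist hU ht hanti)
    (sepDist_le (fun n => (ht n).le) hanti (by linarith [ht 0]))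

lemma exists_sepIndex_lt {F : Finset X} (hF : 1 < F.card) :
    ∃ k, (∀ m < k, finsetAlpha (patchBelow d (sepDist U t) ε) F ≤ t m) ∧
      ∀ x ∈ F, ∀ y ∈ F, x ≠ y → d x y ≤ ε → sepIndex U x y < k := by
  classical
  have hα := finsetAlpha_pos _ (isUltrametricOn_patchBelow_sepDist hd hU ht hhalf htε) hF
  have hex := exists_lt_of_halving hhalf hα
  refine ⟨Nat.find hex, fun m hm => not_lt.1 (Nat.find_min hex hm), fun x hx y hy hxy hxyε => ?_⟩
  have h := finsetAlpha_le (patchBelow d (sepDist U t) ε) hx hy hxy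
  rw [patchBelow_of_le hxyε, sepDist_of_ne hxy] at h
  exact StrictAnti.lt_iff_gt (strictAnti_of_halving hhalf ht) |>.1 ((Nat.find_spec hex).trans_le h)

lemma card_le_two_mul_of_forall_le {F : Finset X} (hF : 1 < F.card)
    (hsmall : ∀ x ∈ F, ∀ y ∈ F, d x y ≤ ε) :
    (F.card : ℝ) ≤ 2 * (finsetDiam (patchBelow d (sepDist U t) ε) F /
      finsetAlpha (patchBelow d (sepDist U t) ε) F) := by
  set D := patchBelow d (sepDist U t) ε
  have hD : IsUltrametricOn D := isUltrametricOn_patchBelow_sepDist hd hU ht hhalf htε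
  have htanti := strictAnti_of_halving hhalf ht
  have hDsep : ∀ x y, x ≠ y → d x y ≤ ε → D x y = t (sepIndex U x y) := fun x y hxy h => by
    rw [show D x y = _ from patchBelow_of_le h, sepDist_of_ne hxy]
  obtain ⟨k, hkα, hk⟩ := exists_sepIndex_lt hd hU ht hhalf htε hF
  have hα := finsetAlpha_pos D hD hF
  obtain ⟨u, hu, v, hv, huv⟩ := exists_eq_finsetDiam D (A := F) (Finset.card_pos.1 (by omega))
  have huv_ne : u ≠ v := by
    rintro rfl
    rw [hD.self_eq_zero] at huv
    linarith [finsetAlpha_le_finsetDiam D hF]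
  set j := sepIndex U u v
  have hδ : finsetDiam D F = t j := by rw [← huv, hDsep u v huv_ne (hsmall u hu v hv)]
  have hj : ∀ x ∈ F, ∀ y ∈ F, x ≠ y → j ≤ sepIndex U x y := fun x hx y hy hxy => by
    have h := le_finsetDiam D hx hy
    rwa [hδ, hDsep x y hxy (hsmall x hx y hy), htanti.le_iff_ge] at h
  obtain ⟨m, rfl⟩ : ∃ m, k = m + 1 :=
    Nat.exists_eq_add_one.2 ((Nat.zero_le j).trans_lt (hk u hu v hv huv_ne (hsmall u hu v hv)))
  have hjm : j ≤ m := Nat.lt_succ_iff.1 (hk u hu v hv huv_ne (hsmall u hu v hv))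
  have hcard : F.card ≤ 2 ^ (m + 1 - j) := by
    have h := card_le_card_image_mul_two_pow U F (fun _ => ()) j (m + 1)
      fun x hx y hy hxy _ => ⟨sepIndex U x y, hj x hx y hy hxy,
        hk x hx y hy hxy (hsmall x hx y hy), sepIndex_separates (hU x y hxy)⟩
    exact h.trans (Nat.mul_le_of_le_div _ _ _ (by simp [Finset.card_le_one]))
  have hpow := two_pow_mul_le_of_halving hhalf j (m - j)
  rw [Nat.add_sub_cancel' hjm] at hpow
  rw [← mul_div_assoc, le_div_iff₀ hα, hδ]
  calc (F.card : ℝ) * finsetAlpha D F ≤ 2 ^ (m + 1 - j) * t m :=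
        mul_le_mul (by exact_mod_cast hcard) (hkα m m.lt_succ_self) hα.le (by positivity)
    _ = 2 * (2 ^ (m - j) * t m) := by rw [Nat.sub_add_comm hjm, pow_succ]; ring
    _ ≤ 2 * t j := by linarith

lemma card_le_card_mul_of_exists_lt {N : Finset X} (hN : ∀ x, ∃ c ∈ N, d c x ≤ ε) {F : Finset X}
    (hF : 1 < F.card) (hlarge : ∃ x ∈ F, ∃ y ∈ F, ε < d x y) :
    (F.card : ℝ) ≤ N.card * (finsetDiam (patchBelow d (sepDist U t) ε) F /
      finsetAlpha (patchBelow d (sepDist U t) ε) F) := by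
  classical
  set D := patchBelow d (sepDist U t) ε
  have hα := finsetAlpha_pos D (isUltrametricOn_patchBelow_sepDist hd hU ht hhalf htε) hF
  obtain ⟨k, hkα, hk⟩ := exists_sepIndex_lt hd hU ht hhalf htε hF
  have hεδ : ε < finsetDiam D F := by
    obtain ⟨u, hu, v, hv, huv⟩ := hlarge
    exact huv.trans_le ((show D u v = d u v from patchBelow_of_lt huv) ▸ le_finsetDiam D hu hv)
  have hscale : 2 ^ k * finsetAlpha D F ≤ finsetDiam D F := by
    rcases k with _ | m
    · simpa using finsetAlpha_le_finsetDiam D hF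
    · have hpow := two_pow_mul_le_of_halving hhalf 0 m
      rw [zero_add] at hpow
      calc 2 ^ (m + 1) * finsetAlpha D F ≤ 2 * (2 ^ m * t m) := by
            rw [pow_succ]; nlinarith [hkα m m.lt_succ_self, pow_pos (two_pos (α := ℝ)) m]
        _ ≤ finsetDiam D F := by linarith
  choose g hgN hg using hN
  have hcard : F.card ≤ N.card * 2 ^ k := by
    have h := card_le_card_image_mul_two_pow U F g 0 k fun x hx y hy hxy hgxy =>
      have hxyε : d x y ≤ ε := hd.le_of_le_of_le (hd.2.1 x (g x) ▸ hg x) (hgxy ▸ hg y)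
      ⟨sepIndex U x y, Nat.zero_le _, hk x hx y hy hxy hxyε, sepIndex_separates (hU x y hxy)⟩
    refine h.trans (Nat.mul_le_mul_right _ (Finset.card_le_card ?_))
    exact Finset.image_subset_iff.2 fun x _ => hgN x
  rw [← mul_div_assoc, le_div_iff₀ hα]
  calc (F.card : ℝ) * finsetAlpha D F ≤ N.card * (2 ^ k * finsetAlpha D F) := by
        rw [← mul_assoc]; gcongr; exact_mod_cast hcard
    _ ≤ N.card * finsetDiam D F := by gcongr

lemma doubling_patchBelow_sepDist {N : Finset X} (hN : ∀ x, ∃ c ∈ N, d c x ≤ ε) :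
    Doubling (patchBelow d (sepDist U t) ε) := by
  refine ⟨N.card + 2, by linarith [N.card.cast_nonneg (α := ℝ)], 1, one_pos, fun F hF => ?_⟩
  have hratio : 0 ≤ finsetDiam (patchBelow d (sepDist U t) ε) F /
      finsetAlpha (patchBelow d (sepDist U t) ε) F := by
    have hα := finsetAlpha_pos _ (isUltrametricOn_patchBelow_sepDist hd hU ht hhalf htε) hF
    exact div_nonneg (hα.le.trans (finsetAlpha_le_finsetDiam _ hF)) hα.le
  rw [Real.rpow_one]
  by_cases hsmall : ∀ x ∈ F, ∀ y ∈ F, d x y ≤ ε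
  · have := card_le_two_mul_of_forall_le hd hU ht hhalf htε hF hsmall
    nlinarith [N.card.cast_nonneg (α := ℝ)]
  · push Not at hsmall
    have := card_le_card_mul_of_exists_lt hd hU ht hhalf htε hN hF hsmall
    nlinarith

end Doubling

end

theorem dense_doubling_ultrametrics_of_compact_general {X : Type*} [TopologicalSpace X]
    [CompactSpace X]
    (S : Set ℝ) (hSsub : S ⊆ Set.Ici 0) (hS0 : (0 : ℝ) ∈ S)
    (hco : ∃ s : ℕ → ℝ, StrictAnti s ∧ (∀ n, s n ∈ S) ∧ Tendsto s atTop (nhds 0)) :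
    ∀ d : X → X → ℝ, MemUlt S d → ∀ ε : ℝ, ε ∈ S → 0 < ε →
      ∃ D : X → X → ℝ, MemUlt S D ∧ Doubling D ∧
        UDdist S D d ≤ ENNReal.ofReal ε := by
  rintro d ⟨hd, hdS, hgen⟩ ε hεS hε
  obtain ⟨s, hs_anti, hsS, hs_lim⟩ := hco
  obtain ⟨t, htS, ht, htε, hhalf⟩ :=
    exists_halving_seq (exists_pos_mem_le_of_strictAnti hSsub hs_anti hsS hs_lim) hε
  have hanti := (strictAnti_of_halving hhalf ht).antitone
  have hsmall := fun c (hc : 0 < c) => exists_lt_of_halving hhalf hc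
  obtain ⟨U, hUball, hUnhds⟩ := exists_seq_sets_of_compact hd hgen ht hanti hsmall
  have hU := separating_of_nhds hd hUnhds
  obtain ⟨N, hN⟩ := exists_finset_forall_le hd hgen hε
  have hρε := sepDist_le (U := U) (fun n => (ht n).le) hanti (by linarith [ht 0] : t 0 ≤ ε)
  refine ⟨patchBelow d (sepDist U t) ε,
    ⟨isUltrametricOn_patchBelow_sepDist hd hU ht hhalf htε,
      fun x y => patchBelow_mem hdS (sepDist_mem hS0 htS), ?_⟩,
    doubling_patchBelow_sepDist hd hU ht hhalf htε hN,
    UDdist_le_ofReal hεS fun x y => ⟨patchBelow_le_max hρε, le_max_patchBelow⟩⟩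
  exact hgen.of_ballRefines
    (ballRefines_dist_patchBelow hε (ballRefines_dist_sepDist hU hUball ht hanti hsmall))
    (ballRefines_patchBelow_dist hε (ballRefines_sepDist_dist hd hUnhds ht hanti))

/-- On a compact ultrametrizable space, for a range set `S` with countable
coinitiality, every `d ∈ Ult(X,S)` can be approximated within any `ε > 0` of `S` by a
doubling `D ∈ Ult(X,S)`; hence doubling ultrametrics are dense in
`(Ult(X,S), 𝒰𝒟_X^S)`. -/
theorem dense_doubling_ultrametrics_of_compact {X : Type*} [TopologicalSpace X]
    [CompactSpace X]
    (S : Set ℝ) (hSsub : S ⊆ Set.Ici 0) (hS0 : (0 : ℝ) ∈ S)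
    (hco : ∃ s : ℕ → ℝ, StrictAnti s ∧ (∀ n, s n ∈ S) ∧ Tendsto s atTop (nhds 0))
    (hultra : ∃ ρ : X → X → ℝ, IsUltrametricOn ρ ∧ GeneratesTopology ρ) :
    ∀ d : X → X → ℝ, MemUlt S d → ∀ ε : ℝ, ε ∈ S → 0 < ε →
      ∃ D : X → X → ℝ, MemUlt S D ∧ Doubling D ∧
        UDdist S D d ≤ ENNReal.ofReal ε :=
  dense_doubling_ultrametrics_of_compact_general S hSsub hS0 hco
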